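/- For the star graph T_{p,q,r}, the quadratic Tits form satisfies B(z) = U(x) + U(y) + U(z) + (1/p + 1/q + 1/r − 1)u₀², where U(x) = Σ_{i=1}^{p−1} ((i+1)/i)(x_i − (i/(i+1))x_{i+1})² (with x_p := u₀), and similarly for U(y), U(z). Consequently B is positive definite iff 1/p + 1/q + 1/r > 1, and positive semidefinite iff 1/p + 1/q + 1/r ≥ 1. -/

import Mathlib

noncomputable section

/-- The contribution `V(x₁,…,x_{p−1},u₀)` of one arm of `T_{p,q,r}` to half the Tits form,
where by convention `x p = u₀` is the coordinate at the branch vertex: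
`V = Σᵢ xᵢ² − Σᵢ xᵢx_{i+1} − x_{p−1}u₀`. -/
def armV (p : ℕ) (x : ℕ → ℝ) : ℝ :=
  (∑ i ∈ Finset.Icc 1 (p - 1), (x i) ^ 2)
    - (∑ i ∈ Finset.Icc 1 (p - 2), x i * x (i + 1))
    - x (p - 1) * x p

/-- `U(x) = Σ_{i=1}^{p−1} ((i+1)/i) (xᵢ − (i/(i+1)) x_{i+1})²` (with `x p = u₀`). -/
def armU (p : ℕ) (x : ℕ → ℝ) : ℝ :=
  ∑ i ∈ Finset.Icc 1 (p - 1),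
    (((i : ℝ) + 1) / i) * (x i - ((i : ℝ) / (i + 1)) * x (i + 1)) ^ 2

/-- The quadratic Tits form `B(z)` of the star graph `T_{p,q,r}`:
`(1/2)B(z) = V(x) + V(y) + V(z) + u₀²`, where `u₀` is the coordinate at the branch vertex
(so that `x p = y q = z r = u₀`). -/
def titsB (p q r : ℕ) (x y z : ℕ → ℝ) : ℝ :=
  2 * (armV p x + armV q y + armV r z + (x p) ^ 2)

/-!
Completing the square along each arm, starting from the leaf, gives
`U(x) = 2 V(x) + (1 - 1/p) u₀²`, so that `B = U(x) + U(y) + U(z) + (1/p + 1/q + 1/r - 1) u₀²`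
with each `U ≥ 0`. The arm vectors `xᵢ = i/p`, `yᵢ = i/q`, `zᵢ = i/r` make every square in the
`U`'s vanish, so `B` takes the value `1/p + 1/q + 1/r - 1` there; this settles both converses.
When `1/p + 1/q + 1/r > 1`, `B = 0` forces `u₀ = 0` and then each `xᵢ = i/(i+1) x_{i+1}` vanishes,
going down the arm.
-/

lemma armU_succ (p : ℕ) (x : ℕ → ℝ) :
    armU (p + 1) x = armU p x + ((p + 1) / p) * (x p - (p / (p + 1)) * x (p + 1)) ^ 2 := by
  rcases p with _ | p
  · simp [armU]
  · rw [armU, armU, add_tsub_cancel_right, Nat.add_sub_cancel,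
      Finset.sum_Icc_succ_top (by omega)]

lemma armV_succ {p : ℕ} (hp : 2 ≤ p) (x : ℕ → ℝ) :
    armV (p + 1) x = armV p x + x p ^ 2 - x p * x (p + 1) := by
  obtain ⟨k, rfl⟩ : ∃ k, p = k + 2 := ⟨p - 2, by omega⟩
  simp only [armV, show k + 2 + 1 - 1 = k + 1 + 1 from rfl, show k + 2 + 1 - 2 = k + 1 from rfl,
    show k + 2 - 1 = k + 1 from rfl, show k + 2 - 2 = k from rfl,
    Finset.sum_Icc_succ_top (show 1 ≤ k + 1 + 1 by omega),
    Finset.sum_Icc_succ_top (show 1 ≤ k + 1 by omega)]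
  ring

lemma armU_eq_two_mul_armV_add {p : ℕ} (hp : 2 ≤ p) (x : ℕ → ℝ) :
    armU p x = 2 * armV p x + (1 - 1 / (p : ℝ)) * x p ^ 2 := by
  induction p, hp using Nat.le_induction with
  | base =>
    simp only [armU, armV, Nat.add_one_sub_one, tsub_self, Finset.Icc_self, Finset.sum_singleton,
      Order.lt_one_iff, Finset.Icc_eq_empty_of_lt, Finset.sum_empty, Nat.cast_one, Nat.cast_ofNat]
    ring
  | succ p hp ih =>
    have hp0 : (p : ℝ) ≠ 0 := by positivity
    rw [armU_succ, armV_succ hp, ih]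
    push_cast
    field_simp
    ring

lemma armU_nonneg (p : ℕ) (x : ℕ → ℝ) : 0 ≤ armU p x :=
  Finset.sum_nonneg fun _ _ => by positivity

lemma armU_eq_zero_iff (p : ℕ) (x : ℕ → ℝ) :
    armU p x = 0 ↔ ∀ i ∈ Finset.Icc 1 (p - 1), x i = (i / (i + 1)) * x (i + 1) := by
  rw [armU, Finset.sum_eq_zero_iff_of_nonneg fun _ _ => by positivity]
  refine forall₂_congr fun i hi => ?_
  have hi : (i : ℝ) ≠ 0 := by have := (Finset.mem_Icc.mp hi).1; positivity
  have hc : ((i : ℝ) + 1) / i ≠ 0 := by positivity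
  rw [mul_eq_zero_iff_left hc, sq_eq_zero_iff, sub_eq_zero]

lemma eq_zero_of_armU_eq_zero {p : ℕ} {x : ℕ → ℝ} (hU : armU p x = 0) (hxp : x p = 0) :
    ∀ i ∈ Finset.Icc 1 (p - 1), x i = 0 := by
  have hrel := (armU_eq_zero_iff p x).mp hU
  suffices h : ∀ m (hm : m ≤ p), 1 ≤ m → x m = 0 from
    fun i hi => h i (by have := Finset.mem_Icc.mp hi; omega) (Finset.mem_Icc.mp hi).1
  intro m hm
  refine Nat.decreasingInduction (motive := fun m _ => 1 ≤ m → x m = 0)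
    (fun k hk ih hk1 => ?_) (fun _ => hxp) hm
  rw [hrel k (Finset.mem_Icc.mpr ⟨hk1, by omega⟩), ih (by omega), mul_zero]

lemma armU_natCast_div (p : ℕ) (c : ℝ) : armU p (fun i => i / c) = 0 :=
  Finset.sum_eq_zero fun i _ => by
    have : (i : ℝ) + 1 ≠ 0 := by positivity
    push_cast
    rw [div_mul_div_comm, mul_comm (i : ℝ), mul_div_mul_left _ _ this, sub_self]
    ring

lemma titsB_eq_armU_add {p q r : ℕ} (hp : 2 ≤ p) (hq : 2 ≤ q) (hr : 2 ≤ r)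
    {x y z : ℕ → ℝ} (hxy : x p = y q) (hyz : y q = z r) :
    titsB p q r x y z
      = armU p x + armU q y + armU r z
        + (1 / (p : ℝ) + 1 / (q : ℝ) + 1 / (r : ℝ) - 1) * x p ^ 2 := by
  rw [titsB, armU_eq_two_mul_armV_add hp, armU_eq_two_mul_armV_add hq,
    armU_eq_two_mul_armV_add hr, ← hyz, ← hxy]
  ring

lemma titsB_natCast_div {p q r : ℕ} (hp : 2 ≤ p) (hq : 2 ≤ q) (hr : 2 ≤ r) :
    titsB p q r (fun i => i / p) (fun i => i / q) (fun i => i / r)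
      = 1 / (p : ℝ) + 1 / (q : ℝ) + 1 / (r : ℝ) - 1 := by
  have hx : ∀ n : ℕ, 2 ≤ n → (n : ℝ) / n = 1 := fun n hn => div_self (by positivity)
  rw [titsB_eq_armU_add hp hq hr (by simp only [hx p hp, hx q hq])
      (by simp only [hx q hq, hx r hr])]
  simp only [armU_natCast_div, hx p hp]
  ring

lemma titsB_nonneg {p q r : ℕ} (hp : 2 ≤ p) (hq : 2 ≤ q) (hr : 2 ≤ r)
    (hpqr : 1 ≤ 1 / (p : ℝ) + 1 / (q : ℝ) + 1 / (r : ℝ))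
    {x y z : ℕ → ℝ} (hxy : x p = y q) (hyz : y q = z r) : 0 ≤ titsB p q r x y z := by
  rw [titsB_eq_armU_add hp hq hr hxy hyz]
  have := armU_nonneg p x
  have := armU_nonneg q y
  have := armU_nonneg r z
  have : 0 ≤ (1 / (p : ℝ) + 1 / (q : ℝ) + 1 / (r : ℝ) - 1) * x p ^ 2 :=
    mul_nonneg (by linarith) (sq_nonneg _)
  linarith

lemma eq_zero_of_titsB_eq_zero {p q r : ℕ} (hp : 2 ≤ p) (hq : 2 ≤ q) (hr : 2 ≤ r)
    (hpqr : 1 < 1 / (p : ℝ) + 1 / (q : ℝ) + 1 / (r : ℝ))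
    {x y z : ℕ → ℝ} (hxy : x p = y q) (hyz : y q = z r) (hB : titsB p q r x y z = 0) :
    (∀ i ∈ Finset.Icc 1 (p - 1), x i = 0) ∧
      (∀ i ∈ Finset.Icc 1 (q - 1), y i = 0) ∧
      (∀ i ∈ Finset.Icc 1 (r - 1), z i = 0) ∧ x p = 0 := by
  rw [titsB_eq_armU_add hp hq hr hxy hyz] at hB
  have hUx := armU_nonneg p x
  have hUy := armU_nonneg q y
  have hUz := armU_nonneg r z
  have hu := mul_nonneg (sub_nonneg.mpr hpqr.le) (sq_nonneg (x p))
  have hu0 : x p = 0 := by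
    have : (1 / (p : ℝ) + 1 / (q : ℝ) + 1 / (r : ℝ) - 1) * x p ^ 2 = 0 := by linarith
    rw [mul_eq_zero_iff_left (sub_pos.mpr hpqr).ne'] at this
    exact pow_eq_zero_iff two_ne_zero |>.mp this
  exact ⟨eq_zero_of_armU_eq_zero (by linarith) hu0,
    eq_zero_of_armU_eq_zero (by linarith) (hxy ▸ hu0),
    eq_zero_of_armU_eq_zero (by linarith) (hyz ▸ hxy ▸ hu0), hu0⟩

/-- For the star graph `T_{p,q,r}`, the quadratic Tits form satisfies
`B(z) = U(x) + U(y) + U(z) + (1/p + 1/q + 1/r − 1)u₀²`.  Consequently `B` is positive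
definite iff `1/p + 1/q + 1/r > 1`, and positive semidefinite iff `1/p + 1/q + 1/r ≥ 1`. -/
theorem titsForm_Tpqr (p q r : ℕ) (hp : 2 ≤ p) (hq : 2 ≤ q) (hr : 2 ≤ r) :
    (∀ x y z : ℕ → ℝ, x p = y q → y q = z r →
      titsB p q r x y z
        = armU p x + armU q y + armU r z
          + (1 / (p : ℝ) + 1 / (q : ℝ) + 1 / (r : ℝ) - 1) * (x p) ^ 2) ∧
    ((∀ x y z : ℕ → ℝ, x p = y q → y q = z r →
        0 ≤ titsB p q r x y z ∧
        (titsB p q r x y z = 0 →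
          (∀ i ∈ Finset.Icc 1 (p - 1), x i = 0) ∧
          (∀ i ∈ Finset.Icc 1 (q - 1), y i = 0) ∧
          (∀ i ∈ Finset.Icc 1 (r - 1), z i = 0) ∧ x p = 0))
      ↔ 1 < 1 / (p : ℝ) + 1 / (q : ℝ) + 1 / (r : ℝ)) ∧
    ((∀ x y z : ℕ → ℝ, x p = y q → y q = z r → 0 ≤ titsB p q r x y z)
      ↔ 1 ≤ 1 / (p : ℝ) + 1 / (q : ℝ) + 1 / (r : ℝ)) := by
  have hx : ∀ n : ℕ, 2 ≤ n → (n : ℝ) / n = 1 := fun n hn => div_self (by positivity)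
  have hxy : (p : ℝ) / p = q / q := by rw [hx p hp, hx q hq]
  have hyz : (q : ℝ) / q = r / r := by rw [hx q hq, hx r hr]
  have hB := titsB_natCast_div hp hq hr
  refine ⟨fun x y z => titsB_eq_armU_add hp hq hr, ⟨fun h => ?_, fun hpqr x y z hxy hyz =>
      ⟨titsB_nonneg hp hq hr hpqr.le hxy hyz, eq_zero_of_titsB_eq_zero hp hq hr hpqr hxy hyz⟩⟩,
    ⟨fun h => ?_, fun hpqr x y z => titsB_nonneg hp hq hr hpqr⟩⟩
  · obtain ⟨hnonneg, hdef⟩ := h (fun i => i / p) (fun i => i / q) (fun i => i / r) hxy hyz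
    refine lt_of_le_of_ne (by linarith) fun hone => ?_
    exact one_ne_zero ((hx p hp).symm.trans (hdef (by linarith)).2.2.2)
  · linarith [h (fun i => i / p) (fun i => i / q) (fun i => i / r) hxy hyz]

end
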